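/- (Attention weights cannot be Shapley Values, Case 1.) Let (N, v) be a TU-game where the payoff is the sum of attention weights: for attention matrix (a_{j,i})_{j,i ∈ N} with nonnegative entries and row sums Σ_i a_{j,i} = 1 for each attending player j, suppose v(S) equals the total attention paid by players in S, so v(S ∪ {j}) − v(S) = 1 for every attending player j and S ⊆ N \ {j}. If two attending players j, k receive different total attention, i.e., Σ_{m} a_{m,j} ≠ Σ_{m} a_{m,k}, then it is impossible that φ_j(v) = Σ_m a_{m,j} and φ_k(v) = Σ_m a_{m,k} simultaneously. -/
import Mathlib


open Finset

/-- The set of players preceding `i` in the permutation (ordering) `R`. -/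
def preceding {n : ℕ} (R : Equiv.Perm (Fin n)) (i : Fin n) : Finset (Fin n) :=
  Finset.univ.filter (fun j => R j < R i)

/-- The Shapley Value of player `i` for payoff function `v`. -/
noncomputable def shapley {n : ℕ} (v : Finset (Fin n) → ℝ) (i : Fin n) : ℝ :=
  (1 / (Nat.factorial n : ℝ)) *
    ∑ R : Equiv.Perm (Fin n), (v (insert i (preceding R i)) - v (preceding R i))


lemma shapley_eq_one {n : ℕ} (v : Finset (Fin n) → ℝ)
    (j : Fin n) (h : ∀ S : Finset (Fin n), j ∉ S → v (insert j S) - v S = 1) :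
    shapley v j = 1 := by
  have hnot : ∀ R : Equiv.Perm (Fin n), j ∉ preceding R j := by
    intro R
    simp [preceding]
  unfold shapley
  rw [Finset.sum_congr rfl (fun R _ => h _ (hnot R))]
  simp [Finset.card_univ, Fintype.card_perm]
  field_simp

theorem attention_weights_not_shapley_case1 {n : ℕ} (v : Finset (Fin n) → ℝ)
    (hv : v ∅ = 0) (a : Fin n → Fin n → ℝ) (ha : ∀ j i, 0 ≤ a j i)
    (A : Finset (Fin n)) (hrow : ∀ j ∈ A, ∑ i : Fin n, a j i = 1)
    (hmarg : ∀ j ∈ A, ∀ S : Finset (Fin n), j ∉ S → v (insert j S) - v S = 1)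
    (j k : Fin n) (hj : j ∈ A) (hk : k ∈ A)
    (hne : ∑ m : Fin n, a m j ≠ ∑ m : Fin n, a m k) :
    ¬ (shapley v j = ∑ m : Fin n, a m j ∧ shapley v k = ∑ m : Fin n, a m k) := by
  rintro ⟨h1, h2⟩
  have e1 := shapley_eq_one v j (hmarg j hj)
  have e2 := shapley_eq_one v k (hmarg k hk)
  exact hne (by rw [← h1, ← h2, e1, e2])
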